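/- Let H be a graded connected bialgebra, let ρ : H → S ⊗ H be a coaction satisfying the cointeraction identity m^{1,3}(ρ ⊗ ρ)Δ = (id ⊗ Δ)ρ, where m^{1,3}(a⊗b⊗c⊗d) = ac⊗b⊗d and S is a commutative bialgebra. Let ℓ : S → k be a character, and define M_ℓ := (ℓ ⊗ id)ρ : H → H. Then for all x ∈ H: (M_ℓ ⊗ M_ℓ)Δ(x) = Δ(M_ℓ(x)), i.e. M_ℓ is a coalgebra morphism for Δ. -/

import Mathlib

set_option autoImplicit false

open TensorProduct

/-- `M_ℓ = (ℓ ⊗ id) ∘ ρ`, the renormalisation map attached to a coaction `ρ` and a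
character `ℓ`. -/
noncomputable def Ml (k H S : Type*) [CommRing k] [AddCommGroup H] [Module k H]
    [CommRing S] [Algebra k S] (ρ : H →ₗ[k] S ⊗[k] H) (ℓ : S →ₐ[k] k) : H →ₗ[k] H :=
  (TensorProduct.lid k H).toLinearMap ∘ₗ TensorProduct.map ℓ.toLinearMap LinearMap.id ∘ₗ ρ

/-!
The character `ℓ` enters `M_ℓ` only through the slant map `s ⊗ h ↦ ℓ(s) h`. This map
commutes with every linear map acting on the second factor, in particular with `Δ`, and
since `ℓ` is multiplicative, slanting the two halves of `ρ ⊗ ρ` separately is the same as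
first multiplying their `S`-components, i.e. applying `m^{1,3}`. The cointeraction
identity then turns `(M_ℓ ⊗ M_ℓ) Δ` into `(ℓ ⊗ id)(id ⊗ Δ) ρ = Δ M_ℓ`.
-/

section Slant

variable {k S M N : Type*} [CommSemiring k] [Semiring S] [Algebra k S]
  [AddCommMonoid M] [Module k M] [AddCommMonoid N] [Module k N]

noncomputable def slant (f : S →ₗ[k] k) : S ⊗[k] M →ₗ[k] M :=
  (TensorProduct.lid k M).toLinearMap ∘ₗ TensorProduct.map f LinearMap.id

@[simp]
lemma slant_tmul (f : S →ₗ[k] k) (s : S) (m : M) : slant f (s ⊗ₜ[k] m) = f s • m := rfl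

lemma comp_slant (f : S →ₗ[k] k) (g : M →ₗ[k] N) :
    g ∘ₗ slant f = slant f ∘ₗ TensorProduct.map LinearMap.id g := by
  ext s m
  simp

lemma map_slant_slant (ℓ : S →ₐ[k] k) :
    TensorProduct.map (slant (M := M) ℓ.toLinearMap) (slant (M := N) ℓ.toLinearMap)
      = slant ℓ.toLinearMap ∘ₗ TensorProduct.map (LinearMap.mul' k S) LinearMap.id
          ∘ₗ (TensorProduct.tensorTensorTensorComm k S M S N).toLinearMap := by
  refine TensorProduct.ext_fourfold' fun a m b n => ?_
  simp [TensorProduct.smul_tmul', TensorProduct.tmul_smul, smul_smul, mul_comm]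

end Slant

theorem stmt_8_general (k H S : Type*) [CommRing k] [Ring H] [Bialgebra k H]
    [CommRing S] [Bialgebra k S]
    (ρ : H →ₗ[k] S ⊗[k] H)
    (hcointer : ∀ x : H,
      (TensorProduct.map (LinearMap.mul' k S) LinearMap.id)
        ((TensorProduct.tensorTensorTensorComm k S H S H)
          ((TensorProduct.map ρ ρ) (Coalgebra.comul (R := k) x)))
      = (TensorProduct.map LinearMap.id (Coalgebra.comul (R := k) (A := H))) (ρ x))
    (ℓ : S →ₐ[k] k) :
    ∀ x : H,
      (TensorProduct.map (Ml k H S ρ ℓ) (Ml k H S ρ ℓ)) (Coalgebra.comul (R := k) x)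
        = Coalgebra.comul (R := k) (Ml k H S ρ ℓ x) := by
  intro x
  have hMl : Ml k H S ρ ℓ = slant ℓ.toLinearMap ∘ₗ ρ := rfl
  calc TensorProduct.map (Ml k H S ρ ℓ) (Ml k H S ρ ℓ) (Coalgebra.comul x)
      = slant ℓ.toLinearMap (TensorProduct.map (LinearMap.mul' k S) LinearMap.id
          (TensorProduct.tensorTensorTensorComm k S H S H
            (TensorProduct.map ρ ρ (Coalgebra.comul x)))) := by
        rw [hMl, TensorProduct.map_comp, map_slant_slant]; rfl
    _ = slant ℓ.toLinearMap (TensorProduct.map LinearMap.id Coalgebra.comul (ρ x)) := by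
        rw [hcointer]
    _ = Coalgebra.comul (Ml k H S ρ ℓ x) :=
        (LinearMap.congr_fun (comp_slant ℓ.toLinearMap Coalgebra.comul) (ρ x)).symm

/-- If `ρ : H → S ⊗ H` is a coaction cointeracting with the coproduct `Δ` of a
bialgebra `H` via `m¹³(ρ ⊗ ρ)Δ = (id ⊗ Δ)ρ`, with `S` a commutative bialgebra and
`ℓ : S → k` a character, then `M_ℓ = (ℓ ⊗ id)ρ` is a coalgebra morphism for `Δ`. -/
theorem stmt_8 (k H S : Type*) [CommRing k] [Ring H] [Bialgebra k H]
    [CommRing S] [Bialgebra k S]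
    (ρ : H →ₗ[k] S ⊗[k] H)
    (hcoassoc : ∀ x : H, (TensorProduct.assoc k S S H)
        ((TensorProduct.map (Coalgebra.comul (R := k) (A := S)) LinearMap.id) (ρ x))
      = (TensorProduct.map LinearMap.id ρ) (ρ x))
    (hcounit : ∀ x : H, (TensorProduct.lid k H)
        ((TensorProduct.map (Coalgebra.counit (R := k) (A := S)) LinearMap.id) (ρ x)) = x)
    (hcointer : ∀ x : H,
      (TensorProduct.map (LinearMap.mul' k S) LinearMap.id)
        ((TensorProduct.tensorTensorTensorComm k S H S H)
          ((TensorProduct.map ρ ρ) (Coalgebra.comul (R := k) x)))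
      = (TensorProduct.map LinearMap.id (Coalgebra.comul (R := k) (A := H))) (ρ x))
    (ℓ : S →ₐ[k] k) :
    ∀ x : H,
      (TensorProduct.map (Ml k H S ρ ℓ) (Ml k H S ρ ℓ)) (Coalgebra.comul (R := k) x)
        = Coalgebra.comul (R := k) (Ml k H S ρ ℓ x) :=
  stmt_8_general k H S ρ hcointer ℓ
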